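/- arXiv:math/0405215 — 4 statements merged into one kernel-verified Lean document; each statement's English description precedes it below -/
import Mathlib

section
/- Let Q(x) = x A xᵗ be a positive definite ternary quadratic form with det A = 1, let f = √Q, and let g = √(Q⁻¹) where Q⁻¹(x) = x A⁻¹ xᵗ. Then for every z ∈ ℝ³ with z ≠ 0, the Fourier-type integral I_f(z) = ∫_{f(u)≤1} e^{2πi z·u} du satisfies |I_f(z)| ≤ 1/(π g(z)²) + 1/(8π³ g(z)⁴). -/
/-!
Write `A = Bᵀ B` and let `O` be the reflection sending `g(z) e₀` to `B⁻ᵀ z`; then `N = B⁻¹ O`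
satisfies `Nᵀ A N = 1` and `Nᵀ z = g(z) e₀`. Since `det A = 1`, `|det N| = 1`, and `u = N v`
turns the ellipsoid into the unit ball and the phase `z ⬝ u` into `g(z) v₀`. Slicing the ball
orthogonally to `e₀` into discs of area `π (1 - s²)` gives
`I_f(z) = (sin t - t cos t) / (2 π² g(z)³)` with `t = 2π g(z)`, and
`(sin t - t cos t)² ≤ 1 + t² ≤ (t + 1/(2t))²` gives the bound.
-/

open MeasureTheory Real Matrix

namespace Matrix

variable {n : Type*} [Fintype n] [DecidableEq n]

theorem exists_mem_orthogonalGroup_mulVec_single (w : n → ℝ) (i : n) :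
    ∃ O ∈ orthogonalGroup n ℝ, O *ᵥ Pi.single i √(w ⬝ᵥ w) = w := by
  set v : EuclideanSpace ℝ n := WithLp.toLp 2 (Pi.single i √(w ⬝ᵥ w))
  have hv : ‖v‖ = ‖WithLp.toLp 2 w‖ := by
    simp [v, EuclideanSpace.norm_eq, dotProduct, sq]
  set b := (EuclideanSpace.basisFun n ℝ).toBasis
  set R := Submodule.reflection (ℝ ∙ (v - WithLp.toLp 2 w))ᗮ
  refine ⟨LinearMap.toMatrix b b R.toLinearEquiv, R.toMatrix_mem_unitaryGroup _ _, ?_⟩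
  have h := LinearMap.toMatrix_mulVec_repr b b R.toLinearEquiv v
  rw [LinearEquiv.coe_coe, LinearIsometryEquiv.coe_toLinearEquiv,
    Submodule.reflection_sub hv] at h
  simp only [b, EuclideanSpace.basisFun_toBasis] at h ⊢
  exact h

variable {A N : Matrix n n ℝ}

theorem inv_eq_mul_transpose_of_transpose_mul_mul_eq_one (h : Nᵀ * A * N = 1) :
    A⁻¹ = N * Nᵀ :=
  inv_eq_left_inv <| by rw [Matrix.mul_assoc, mul_eq_one_comm.mp h]

theorem dotProduct_inv_mulVec_self_eq (h : Nᵀ * A * N = 1) (z : n → ℝ) :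
    z ⬝ᵥ A⁻¹ *ᵥ z = Nᵀ *ᵥ z ⬝ᵥ Nᵀ *ᵥ z := by
  rw [inv_eq_mul_transpose_of_transpose_mul_mul_eq_one h, ← mulVec_mulVec, dotProduct_mulVec,
    ← mulVec_transpose]

theorem abs_det_eq_one_of_transpose_mul_mul_eq_one (h : Nᵀ * A * N = 1) (hA : A.det = 1) :
    |N.det| = 1 := by
  have h := congrArg det h
  rw [det_mul, det_mul, det_transpose, hA, mul_one, det_one] at h
  rcases mul_self_eq_one_iff.mp h with h | h <;> simp [h]

theorem dotProduct_mulVec_mulVec_eq_self (h : Nᵀ * A * N = 1) (v : n → ℝ) :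
    N *ᵥ v ⬝ᵥ A *ᵥ N *ᵥ v = v ⬝ᵥ v := by
  rw [dotProduct_mulVec, vecMul_mulVec, ← dotProduct_mulVec, mulVec_mulVec, h, one_mulVec]

theorem PosDef.exists_transpose_mul_mul_eq_one_and_transpose_mulVec_eq_single
    (hA : A.PosDef) (z : n → ℝ) (i : n) :
    ∃ N : Matrix n n ℝ, Nᵀ * A * N = 1 ∧ Nᵀ *ᵥ z = Pi.single i √(z ⬝ᵥ A⁻¹ *ᵥ z) := by
  open scoped MatrixOrder in
  obtain ⟨B, rfl⟩ := CStarAlgebra.nonneg_iff_eq_star_mul_self.mp hA.posSemidef.nonneg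
  rw [star_eq_conjTranspose, conjTranspose_eq_transpose_of_trivial] at hA ⊢
  have hB : IsUnit B.det := by
    have := hA.det_pos
    rw [det_mul, det_transpose] at this
    exact (left_ne_zero_of_mul this.ne').isUnit
  have hS : (B⁻¹)ᵀ * (Bᵀ * B) * B⁻¹ = 1 := by
    rw [transpose_nonsing_inv, Matrix.mul_assoc, Matrix.mul_assoc, mul_nonsing_inv _ hB,
      Matrix.mul_one, nonsing_inv_mul _ (by rwa [det_transpose])]
  obtain ⟨O, hO, hOw⟩ := exists_mem_orthogonalGroup_mulVec_single ((B⁻¹)ᵀ *ᵥ z) i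
  rw [mem_orthogonalGroup_iff'] at hO
  refine ⟨B⁻¹ * O, ?_, ?_⟩
  · calc (B⁻¹ * O)ᵀ * (Bᵀ * B) * (B⁻¹ * O) = Oᵀ * ((B⁻¹)ᵀ * (Bᵀ * B) * B⁻¹) * O := by
          simp only [transpose_mul, Matrix.mul_assoc]
      _ = 1 := by rw [hS, Matrix.mul_one, hO]
  · have hw : Oᵀ *ᵥ (B⁻¹)ᵀ *ᵥ z = Pi.single i √((B⁻¹)ᵀ *ᵥ z ⬝ᵥ (B⁻¹)ᵀ *ᵥ z) := by
      conv_lhs => rw [← hOw, mulVec_mulVec, hO, one_mulVec]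
    rw [dotProduct_inv_mulVec_self_eq hS, transpose_mul, ← mulVec_mulVec, hw]

variable {M : Matrix n n ℝ}

theorem measurePreserving_mulVec (hM : |M.det| = 1) :
    MeasurePreserving (M *ᵥ ·) volume volume := by
  have hM0 : M.det ≠ 0 := fun h => by simp [h] at hM
  refine ⟨(toLin' M).continuous_of_finiteDimensional.measurable, ?_⟩
  rw [show (M *ᵥ ·) = toLin' M from rfl, Real.map_matrix_volume_pi_eq_smul_volume_pi hM0,
    abs_inv, hM]
  simp

theorem setIntegral_preimage_mulVec {E : Type*} [NormedAddCommGroup E] [NormedSpace ℝ E]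
    (hM : |M.det| = 1) (F : (n → ℝ) → E) (s : Set (n → ℝ)) :
    ∫ v in (M *ᵥ ·) ⁻¹' s, F (M *ᵥ v) = ∫ u in s, F u := by
  have hM0 : LinearMap.det (toLin' M) ≠ 0 := by
    rw [LinearMap.det_toLin']; exact fun h => by simp [h] at hM
  exact (measurePreserving_mulVec hM).setIntegral_preimage_emb
    (LinearMap.equivOfDetNeZero _ hM0).toContinuousLinearEquiv.toHomeomorph.measurableEmbedding F s

end Matrix

theorem isCompact_setOf_dotProduct_self_le {ι : Type*} [Fintype ι] (ρ : ℝ) :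
    IsCompact {v : ι → ℝ | v ⬝ᵥ v ≤ ρ} := by
  refine Metric.isCompact_of_isClosed_isBounded (isClosed_le (by fun_prop) continuous_const)
    ((Metric.isBounded_closedBall (x := 0) (r := √ρ)).subset fun v hv => ?_)
  rw [mem_closedBall_zero_iff, pi_norm_le_iff_of_nonneg (sqrt_nonneg ρ)]
  intro i
  refine abs_le_sqrt (le_trans ?_ hv)
  simpa [dotProduct, sq] using
    Finset.single_le_sum (f := fun j => v j * v j) (fun j _ => mul_self_nonneg (v j))
      (Finset.mem_univ i)

theorem volume_setOf_dotProduct_self_le_fin_two (ρ : ℝ) :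
    volume {y : Fin 2 → ℝ | y ⬝ᵥ y ≤ ρ} = ENNReal.ofReal (π * ρ) := by
  rcases lt_or_ge ρ 0 with hρ | hρ
  · have hempty : {y : Fin 2 → ℝ | y ⬝ᵥ y ≤ ρ} = ∅ :=
      Set.eq_empty_of_forall_notMem fun y hy =>
        (dotProduct_self_star_nonneg y).not_gt (by simpa using hy.trans_lt hρ)
    rw [hempty, measure_empty, ENNReal.ofReal_of_nonpos (by nlinarith [pi_pos])]
  have hball : {y : Fin 2 → ℝ | y ⬝ᵥ y ≤ ρ} =
      WithLp.toLp 2 ⁻¹' Metric.closedBall (0 : EuclideanSpace ℝ (Fin 2)) √ρ := by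
    ext y
    simp [EuclideanSpace.norm_eq, sqrt_le_sqrt_iff hρ, dotProduct, sq]
  rw [hball, (PiLp.volume_preserving_toLp (Fin 2)).measure_preimage
      measurableSet_closedBall.nullMeasurableSet, EuclideanSpace.volume_closedBall_fin_two,
    ← ENNReal.ofReal_pow (sqrt_nonneg ρ), sq_sqrt hρ, ← ENNReal.ofReal_mul hρ, mul_comm]

theorem setIntegral_dotProduct_self_le_one_fin_three {E : Type*} [NormedAddCommGroup E]
    [NormedSpace ℝ E] [CompleteSpace E] {F : ℝ → E} (hF : Continuous F) :
    ∫ v in {v : Fin 3 → ℝ | v ⬝ᵥ v ≤ 1}, F (v 0) =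
      ∫ s in (-1 : ℝ)..1, (π * (1 - s ^ 2)) • F s := by
  set ψ := (MeasurableEquiv.piFinSuccAbove (fun _ : Fin 3 => ℝ) 0).symm
  have hψ : MeasurePreserving ψ volume volume :=
    (volume_preserving_piFinSuccAbove (fun _ : Fin 3 => ℝ) 0).symm _
  have hψ0 (p : ℝ × (Fin 2 → ℝ)) : ψ p 0 = p.1 := by
    simp [ψ, MeasurableEquiv.piFinSuccAbove_symm_apply]
  set D := {p : ℝ × (Fin 2 → ℝ) | p.2 ⬝ᵥ p.2 ≤ 1 - p.1 ^ 2}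
  have hpre : ψ ⁻¹' {v | v ⬝ᵥ v ≤ 1} = D := by
    ext p
    have : ψ p ⬝ᵥ ψ p = p.1 ^ 2 + p.2 ⬝ᵥ p.2 := by
      rw [dotProduct, Fin.sum_univ_succ]
      simp [ψ, MeasurableEquiv.piFinSuccAbove_symm_apply, dotProduct, sq]
    change ψ p ⬝ᵥ ψ p ≤ 1 ↔ p.2 ⬝ᵥ p.2 ≤ 1 - p.1 ^ 2
    rw [this, le_sub_iff_add_le']
  have hint : IntegrableOn (fun p : ℝ × (Fin 2 → ℝ) => F p.1) D := by
    rw [← hpre, show (fun p : ℝ × (Fin 2 → ℝ) => F p.1) = (fun v => F (v 0)) ∘ ψ from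
      funext fun p => by simp [hψ0]]
    exact (hψ.integrableOn_comp_preimage ψ.measurableEmbedding).mpr
      ((hF.comp (continuous_apply 0)).continuousOn.integrableOn_compact
        (isCompact_setOf_dotProduct_self_le 1))
  have hD : MeasurableSet D := measurableSet_le (by fun_prop) (by fun_prop)
  have hslice (s : ℝ) : ∫ y, D.indicator (fun p => F p.1) (s, y) =
      (Set.Icc (-1 : ℝ) 1).indicator (fun s => (π * (1 - s ^ 2)) • F s) s := by
    rw [show (fun y => D.indicator (fun p => F p.1) (s, y)) =
        {y : Fin 2 → ℝ | y ⬝ᵥ y ≤ 1 - s ^ 2}.indicator (fun _ => F s) from rfl,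
      integral_indicator_const _ (measurableSet_le (by fun_prop) (by fun_prop)), measureReal_def,
      volume_setOf_dotProduct_self_le_fin_two, ENNReal.toReal_ofReal']
    by_cases hs : s ∈ Set.Icc (-1 : ℝ) 1
    · rw [Set.indicator_of_mem hs, max_eq_left (mul_nonneg pi_pos.le (by nlinarith [hs.1, hs.2]))]
    · rw [Set.indicator_of_notMem hs, max_eq_right, zero_smul]
      rw [Set.mem_Icc, not_and_or, not_le, not_le] at hs
      exact mul_nonpos_of_nonneg_of_nonpos pi_pos.le (by rcases hs with hs | hs <;> nlinarith)
  rw [← hψ.setIntegral_preimage_emb ψ.measurableEmbedding, hpre]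
  simp only [hψ0]
  rw [← integral_indicator hD, Measure.volume_eq_prod,
    integral_prod _ ((integrable_indicator_iff hD).mpr hint)]
  simp only [hslice]
  rw [integral_indicator measurableSet_Icc, integral_Icc_eq_integral_Ioc,
    ← intervalIntegral.integral_of_le (by norm_num)]

section

open Complex

theorem hasDerivAt_one_sub_sq_mul_cexp_antideriv {a : ℂ} (ha : a ≠ 0) (w : ℂ) :
    HasDerivAt (fun w => cexp (a * w) * ((1 - w ^ 2) / a + 2 * w / a ^ 2 - 2 / a ^ 3))
      ((1 - w ^ 2) * cexp (a * w)) w := by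
  have hexp : HasDerivAt (fun w => cexp (a * w)) (cexp (a * w) * a) w := by
    simpa using ((hasDerivAt_id w).const_mul a).cexp
  have hpoly : HasDerivAt (fun w => (1 - w ^ 2) / a + 2 * w / a ^ 2 - 2 / a ^ 3)
      (-(2 * w) / a + 2 / a ^ 2) w := by
    have hsq : HasDerivAt (fun w : ℂ => w ^ 2) (2 * w) w := by simpa using hasDerivAt_pow 2 w
    have hlin : HasDerivAt (fun w : ℂ => 2 * w) 2 w := by simpa using (hasDerivAt_id w).const_mul 2
    exact (((hsq.const_sub 1).div_const a).fun_add (hlin.div_const (a ^ 2))).sub_const _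
  refine (hexp.fun_mul hpoly).congr_deriv ?_
  field_simp
  ring

theorem integral_one_sub_sq_mul_cexp_mul_I {t : ℝ} (ht : t ≠ 0) :
    ∫ s in (-1 : ℝ)..1, (1 - (s : ℂ) ^ 2) * cexp (t * I * s) =
      ((4 * (Real.sin t - t * Real.cos t) / t ^ 3 : ℝ) : ℂ) := by
  have htc : (t : ℂ) ≠ 0 := ofReal_ne_zero.mpr ht
  rw [intervalIntegral.integral_eq_sub_of_hasDerivAt
    (fun s _ =>
      (hasDerivAt_one_sub_sq_mul_cexp_antideriv (mul_ne_zero htc I_ne_zero) s).comp_ofReal)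
    (by apply Continuous.intervalIntegrable; fun_prop)]
  have hneg : (t : ℂ) * I * ((-1 : ℝ) : ℂ) = ((-t : ℝ) : ℂ) * I := by push_cast; ring
  simp only [ofReal_one, mul_one, hneg, exp_mul_I, ← ofReal_cos, ← ofReal_sin, Real.cos_neg,
    Real.sin_neg]
  push_cast
  field_simp
  rw [show I ^ 3 = -I by rw [pow_succ, I_sq]; ring]
  ring

end

-- `(sin t - t cos t)² + (cos t + t sin t)² = 1 + t²`
theorem abs_sin_sub_mul_cos_le {t : ℝ} (ht : 0 < t) : |sin t - t * cos t| ≤ t + 1 / (2 * t) := by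
  have hsq : (sin t - t * cos t) ^ 2 ≤ (t + 1 / (2 * t)) ^ 2 := by
    have hexpand : (t + 1 / (2 * t)) ^ 2 = 1 + t ^ 2 + (1 / (2 * t)) ^ 2 := by
      field_simp
      ring
    nlinarith [sin_sq_add_cos_sq t, sq_nonneg (cos t + t * sin t), sq_nonneg (1 / (2 * t))]
  exact abs_le_of_sq_le_sq hsq (by positivity)

theorem setIntegral_dotProduct_self_le_one_cexp {r : ℝ} (hr : r ≠ 0) :
    ∫ v in {v : Fin 3 → ℝ | v ⬝ᵥ v ≤ 1}, Complex.exp (2 * π * Complex.I * (r * v 0 : ℝ)) =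
      (((sin (2 * π * r) - 2 * π * r * cos (2 * π * r)) / (2 * π ^ 2 * r ^ 3) : ℝ) : ℂ) := by
  have ht : 2 * π * r ≠ 0 := by positivity
  rw [setIntegral_dotProduct_self_le_one_fin_three (F := fun s =>
    Complex.exp (2 * π * Complex.I * (r * s : ℝ))) (by fun_prop)]
  have hintegrand (s : ℝ) : (π * (1 - s ^ 2)) • Complex.exp (2 * π * Complex.I * (r * s : ℝ)) =
      π * ((1 - (s : ℂ) ^ 2) * Complex.exp ((2 * π * r : ℝ) * Complex.I * s)) := by
    rw [Complex.real_smul]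
    push_cast
    ring_nf
  simp only [hintegrand, intervalIntegral.integral_const_mul,
    integral_one_sub_sq_mul_cexp_mul_I ht]
  norm_cast
  field_simp
  ring

theorem stmt_2_general (A : Matrix (Fin 3) (Fin 3) ℝ) (hApd : A.PosDef)
    (hdet : A.det = 1)
    (f g : (Fin 3 → ℝ) → ℝ)
    (hf : ∀ x, f x = Real.sqrt (x ⬝ᵥ A.mulVec x))
    (hg : ∀ x, g x = Real.sqrt (x ⬝ᵥ A⁻¹.mulVec x))
    (z : Fin 3 → ℝ) (hz : z ≠ 0) :
    ‖(∫ u in {u : Fin 3 → ℝ | f u ≤ 1},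
        Complex.exp (2 * π * Complex.I * (z ⬝ᵥ u : ℝ)))‖
      ≤ 1 / (π * g z ^ 2) + 1 / (8 * π ^ 3 * g z ^ 4) := by
  obtain ⟨N, hN, hNz⟩ :=
    hApd.exists_transpose_mul_mul_eq_one_and_transpose_mulVec_eq_single z 0
  rw [← hg] at hNz
  have hr : 0 < g z := by
    rw [hg]
    exact sqrt_pos.mpr (by simpa using hApd.inv.dotProduct_mulVec_pos hz)
  have hball : (N *ᵥ ·) ⁻¹' {u | f u ≤ 1} = {v | v ⬝ᵥ v ≤ 1} := by
    ext v
    change f (N *ᵥ v) ≤ 1 ↔ v ⬝ᵥ v ≤ 1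
    rw [hf, sqrt_le_one, dotProduct_mulVec_mulVec_eq_self hN]
  have hphase (v : Fin 3 → ℝ) : z ⬝ᵥ N *ᵥ v = g z * v 0 := by
    rw [dotProduct_mulVec, ← mulVec_transpose, hNz, single_dotProduct]
  rw [← setIntegral_preimage_mulVec (abs_det_eq_one_of_transpose_mul_mul_eq_one hN hdet), hball]
  simp only [hphase]
  rw [setIntegral_dotProduct_self_le_one_cexp hr.ne', Complex.norm_real, norm_eq_abs, abs_div,
    abs_of_pos (by positivity : (0 : ℝ) < 2 * π ^ 2 * g z ^ 3)]
  calc |sin (2 * π * g z) - 2 * π * g z * cos (2 * π * g z)| / (2 * π ^ 2 * g z ^ 3)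
      ≤ (2 * π * g z + 1 / (2 * (2 * π * g z))) / (2 * π ^ 2 * g z ^ 3) := by
        gcongr
        exact abs_sin_sub_mul_cos_le (by positivity)
    _ = 1 / (π * g z ^ 2) + 1 / (8 * π ^ 3 * g z ^ 4) := by
        field_simp
        ring

/-- bound on the Fourier transform of the indicator of a ternary
ellipsoid of volume-normalized positive definite form `Q` with `det A = 1`. -/
theorem stmt_2 (A : Matrix (Fin 3) (Fin 3) ℝ) (hA : A.IsSymm) (hApd : A.PosDef)
    (hdet : A.det = 1)
    (f g : (Fin 3 → ℝ) → ℝ)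
    (hf : ∀ x, f x = Real.sqrt (x ⬝ᵥ A.mulVec x))
    (hg : ∀ x, g x = Real.sqrt (x ⬝ᵥ A⁻¹.mulVec x))
    (z : Fin 3 → ℝ) (hz : z ≠ 0) :
    ‖(∫ u in {u : Fin 3 → ℝ | f u ≤ 1},
        Complex.exp (2 * π * Complex.I * (z ⬝ᵥ u : ℝ)))‖
      ≤ 1 / (π * g z ^ 2) + 1 / (8 * π ^ 3 * g z ^ 4) :=
  stmt_2_general A hApd hdet f g hf hg z hz
end

section
/- Let f: [0,1) → ℝ be the function describing the boundary curve of a convex body of rotation: f > 0 and f'' < 0 on (0,1), f(0) ≤ 1, f(1) = 0, with all principal curvature radii of the boundary curve lying in [r_min, r_max]. Then for all 0 ≤ z < 1, |f''(z)| ≥ 1/r_max and |f''(z)| ≤ 8^{3/4}·(r_max³/r_min⁴)·(1−z)^{−3/2}. -/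
/-!
Let `S = sin (arctan f')` be the sine of the tangent angle of the profile curve. Its derivative
is the signed curvature `f'' / (1 + f'²)^{3/2} ≤ -1/r_max`, and `S → -1` as `z → 1`, so the mean
value inequality gives `1 + S z ≥ (1 - z)/r_max`; moreover `S ≤ S 0 = 0`. Hence
`1/(1 + f'²) = cos² = (1 + S)(1 - S) ≥ (1 - z)/r_max`, which bounds the slope, and the upper bound
on `|f''|` follows from `r ≥ r_min`.
-/

open Real Set Filter Topology

theorem hasDerivAt_sin_arctan (x : ℝ) :
    HasDerivAt (fun y => sin (arctan y)) (1 / (1 + x ^ 2) ^ ((3 : ℝ) / 2)) x := by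
  have hA : 0 < 1 + x ^ 2 := by positivity
  convert (hasDerivAt_arctan x).sin using 1
  rw [cos_arctan, show (3 : ℝ) / 2 = 1 / 2 + 1 by norm_num, rpow_add hA, rpow_one,
    ← sqrt_eq_rpow]
  field_simp

theorem tendsto_sin_arctan_atBot : Tendsto (fun y => sin (arctan y)) atBot (𝓝 (-1)) := by
  have := (continuous_sin.tendsto _).comp (tendsto_nhds_of_tendsto_nhdsWithin tendsto_arctan_atBot)
  simpa [Function.comp_def] using this

theorem Convex.image_sub_le_mul_sub_of_hasDerivAt_le {D : Set ℝ} (hD : Convex ℝ D)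
    {g g' : ℝ → ℝ} {C : ℝ} (hg : ∀ x ∈ D, HasDerivAt g (g' x) x)
    (hg' : ∀ x ∈ interior D, g' x ≤ C) {x y : ℝ} (hx : x ∈ D) (hy : y ∈ D) (hxy : x ≤ y) :
    g y - g x ≤ C * (y - x) :=
  hD.image_sub_le_mul_sub_of_deriv_le (fun t ht => (hg t ht).continuousAt.continuousWithinAt)
    (fun t ht => (hg t (interior_subset ht)).differentiableAt.differentiableWithinAt)
    (fun t ht => (hg t (interior_subset ht)).deriv ▸ hg' t ht) x hx y hy hxy

theorem sub_le_mul_sub_of_tendsto_nhdsLT {g g' : ℝ → ℝ} {a b C L : ℝ}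
    (hg : ∀ x ∈ Ico a b, HasDerivAt g (g' x) x) (hg' : ∀ x ∈ Ioo a b, g' x ≤ C)
    (hL : Tendsto g (𝓝[<] b) (𝓝 L)) {x : ℝ} (hx : x ∈ Ico a b) : L - g x ≤ C * (b - x) := by
  have hstep : ∀ᶠ y in 𝓝[<] b, g y - g x ≤ C * (y - x) := by
    filter_upwards [Ioo_mem_nhdsLT hx.2] with y hy
    exact (convex_Ico a b).image_sub_le_mul_sub_of_hasDerivAt_le hg
      (by rwa [interior_Ico]) hx ⟨hx.1.trans hy.1.le, hy.2⟩ hy.1.le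
  refine le_of_tendsto_of_tendsto (hL.sub_const _) ?_ hstep
  exact ((continuous_const.mul (continuous_id.sub continuous_const)).tendsto b).mono_left
    nhdsWithin_le_nhds

theorem div_le_neg_inv_of_div_abs_le {A k r : ℝ} (hA : 0 < A) (hk : k < 0) (h : A / |k| ≤ r) :
    k / A ≤ -r⁻¹ := by
  rw [abs_of_neg hk] at h
  have hr : 0 < r := (div_pos hA (neg_pos.2 hk)).trans_le h
  rw [div_le_iff₀ (neg_pos.2 hk)] at h
  rw [div_le_iff₀ hA, neg_mul, le_neg, inv_mul_le_iff₀ hr]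
  exact h

theorem one_add_sq_le_of_curvatureRadius_le {f' f'' : ℝ → ℝ} {r : ℝ} (hr : 0 < r)
    (hder : ∀ z ∈ Ico (0 : ℝ) 1, HasDerivAt f' (f'' z) z) (hf'0 : f' 0 = 0)
    (hconc : ∀ z ∈ Ioo (0 : ℝ) 1, f'' z < 0)
    (hf'1 : Tendsto f' (𝓝[<] 1) atBot)
    (hradius : ∀ z ∈ Ioo (0 : ℝ) 1, (1 + f' z ^ 2) ^ ((3 : ℝ) / 2) / |f'' z| ≤ r)
    {z : ℝ} (hz : z ∈ Ico (0 : ℝ) 1) :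
    1 + f' z ^ 2 ≤ r / (1 - z) := by
  set S := fun t => sin (arctan (f' t))
  have hS : ∀ t ∈ Ico (0 : ℝ) 1,
      HasDerivAt S (1 / (1 + f' t ^ 2) ^ ((3 : ℝ) / 2) * f'' t) t :=
    fun t ht => (hasDerivAt_sin_arctan (f' t)).comp t (hder t ht)
  have hS' : ∀ t ∈ Ioo (0 : ℝ) 1, 1 / (1 + f' t ^ 2) ^ ((3 : ℝ) / 2) * f'' t ≤ -r⁻¹ := by
    intro t ht
    rw [one_div_mul_eq_div]
    exact div_le_neg_inv_of_div_abs_le (by positivity) (hconc t ht) (hradius t ht)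
  have hS_nonpos : S z ≤ 0 := by
    have hdrop := (convex_Ico (0 : ℝ) 1).image_sub_le_mul_sub_of_hasDerivAt_le hS
      (by rwa [interior_Ico]) (left_mem_Ico.2 one_pos) hz hz.1
    have hS0 : S 0 = 0 := by simp [S, hf'0]
    nlinarith [inv_pos.2 hr, hz.1]
  have hS_lower : (1 - z) / r ≤ 1 + S z := by
    have := sub_le_mul_sub_of_tendsto_nhdsLT hS hS' (tendsto_sin_arctan_atBot.comp hf'1) hz
    rw [div_eq_inv_mul]
    linarith
  have hcos : 1 / (1 + f' z ^ 2) = (1 + S z) * (1 - S z) := by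
    rw [← cos_sq_arctan, cos_sq']
    ring
  have hz1 : 0 < 1 - z := sub_pos.2 hz.2
  have hinv : (1 - z) / r ≤ 1 / (1 + f' z ^ 2) := by
    rw [hcos]
    nlinarith [div_pos hz1 hr]
  rw [div_le_div_iff₀ hr (by positivity)] at hinv
  rw [le_div_iff₀ hz1]
  linarith

theorem rpow_three_halves_div_le {a b : ℝ} (ha : 0 < a) (hab : a ≤ b) (ha1 : a ≤ 1) :
    b ^ ((3 : ℝ) / 2) / a ≤ 8 ^ ((3 : ℝ) / 4) * (b ^ 3 / a ^ 4) := by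
  have hb : 0 < b := ha.trans_le hab
  have hb3 : b ^ 3 = b ^ ((3 : ℝ) / 2) * b ^ ((3 : ℝ) / 2) := by
    rw [← rpow_add hb, ← rpow_natCast]
    norm_num
  have ha3 : a ^ 3 ≤ b ^ ((3 : ℝ) / 2) :=
    calc a ^ 3 = a ^ ((3 : ℕ) : ℝ) := (rpow_natCast a 3).symm
    _ ≤ a ^ ((3 : ℝ) / 2) := rpow_le_rpow_of_exponent_ge ha ha1 (by norm_num)
    _ ≤ b ^ ((3 : ℝ) / 2) := rpow_le_rpow ha.le hab (by norm_num)
  calc b ^ ((3 : ℝ) / 2) / a = b ^ ((3 : ℝ) / 2) * a ^ 3 / a ^ 4 := by field_simp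
  _ ≤ b ^ ((3 : ℝ) / 2) * b ^ ((3 : ℝ) / 2) / a ^ 4 := by gcongr
  _ = b ^ 3 / a ^ 4 := by rw [hb3]
  _ ≤ 8 ^ ((3 : ℝ) / 4) * (b ^ 3 / a ^ 4) :=
    le_mul_of_one_le_left (by positivity [hb]) (one_le_rpow (by norm_num) (by norm_num))

theorem stmt_10_general (rmin rmax : ℝ) (hrmin : 0 < rmin) (hrmax : rmin ≤ rmax)
    (hrmin1 : rmin ≤ 1)
    (f' f'' : ℝ → ℝ)
    (hder2 : ∀ z ∈ Set.Ico (0 : ℝ) 1, HasDerivAt f' (f'' z) z)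
    (hf'0 : f' 0 = 0)
    (hconc : ∀ z ∈ Set.Ioo (0 : ℝ) 1, f'' z < 0)
    (hf'1 : Filter.Tendsto f' (nhdsWithin 1 (Set.Iio 1)) Filter.atBot)
    (hcurv : ∀ z ∈ Set.Ico (0 : ℝ) 1,
      rmin ≤ (1 + f' z ^ 2) ^ ((3 : ℝ) / 2) / |f'' z| ∧
      (1 + f' z ^ 2) ^ ((3 : ℝ) / 2) / |f'' z| ≤ rmax) :
    ∀ z ∈ Set.Ico (0 : ℝ) 1,
      1 / rmax ≤ |f'' z| ∧
      |f'' z| ≤ (8 : ℝ) ^ ((3 : ℝ) / 4) * (rmax ^ 3 / rmin ^ 4)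
        * (1 - z) ^ (-(3 : ℝ) / 2) := by
  intro z hz
  have hr : 0 < rmax := hrmin.trans_le hrmax
  have hz1 : 0 < 1 - z := sub_pos.2 hz.2
  obtain ⟨hmin, hmax⟩ := hcurv z hz
  have hA : 1 ≤ (1 + f' z ^ 2) ^ ((3 : ℝ) / 2) :=
    one_le_rpow (le_add_of_nonneg_right (sq_nonneg _)) (by norm_num)
  have hk : 0 < |f'' z| :=
    (div_pos_iff_of_pos_left (one_pos.trans_le hA)).1 (hrmin.trans_le hmin)
  have hslope : 1 + f' z ^ 2 ≤ rmax / (1 - z) :=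
    one_add_sq_le_of_curvatureRadius_le hr hder2 hf'0 hconc hf'1
      (fun t ht => (hcurv t (Ioo_subset_Ico_self ht)).2) hz
  constructor
  · calc 1 / rmax ≤ (1 + f' z ^ 2) ^ ((3 : ℝ) / 2) / rmax := by gcongr
    _ ≤ |f'' z| := (div_le_comm₀ hk hr).1 hmax
  · calc |f'' z| ≤ (1 + f' z ^ 2) ^ ((3 : ℝ) / 2) / rmin := (le_div_comm₀ hrmin hk).1 hmin
    _ ≤ (rmax / (1 - z)) ^ ((3 : ℝ) / 2) / rmin := by gcongr
    _ = rmax ^ ((3 : ℝ) / 2) / rmin * (1 - z) ^ (-(3 : ℝ) / 2) := by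
      rw [div_rpow hr.le hz1.le, neg_div, rpow_neg hz1.le]
      ring
    _ ≤ _ := by gcongr; exact rpow_three_halves_div_le hrmin hrmax hrmin1

/-- effective curvature bounds for the profile function of a
convex body of rotation: `1/r_max ≤ |f''(z)| ≤ 8^{3/4}·(r_max³/r_min⁴)·(1−z)^{−3/2}`. -/
theorem stmt_10 (rmin rmax : ℝ) (hrmin : 0 < rmin) (hrmax : rmin ≤ rmax)
    (hrmin1 : rmin ≤ 1)
    (f f' f'' : ℝ → ℝ)
    (hder : ∀ z ∈ Set.Ico (0 : ℝ) 1, HasDerivAt f (f' z) z)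
    (hder2 : ∀ z ∈ Set.Ico (0 : ℝ) 1, HasDerivAt f' (f'' z) z)
    (hfpos : ∀ z ∈ Set.Ico (0 : ℝ) 1, 0 < f z)
    (hf0 : f 0 ≤ 1)
    (hf'0 : f' 0 = 0)
    (hconc : ∀ z ∈ Set.Ioo (0 : ℝ) 1, f'' z < 0)
    (hf1 : Filter.Tendsto f (nhdsWithin 1 (Set.Iio 1)) (nhds 0))
    (hf'1 : Filter.Tendsto f' (nhdsWithin 1 (Set.Iio 1)) Filter.atBot)
    (hcurv : ∀ z ∈ Set.Ico (0 : ℝ) 1,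
      rmin ≤ (1 + f' z ^ 2) ^ ((3 : ℝ) / 2) / |f'' z| ∧
      (1 + f' z ^ 2) ^ ((3 : ℝ) / 2) / |f'' z| ≤ rmax) :
    ∀ z ∈ Set.Ico (0 : ℝ) 1,
      1 / rmax ≤ |f'' z| ∧
      |f'' z| ≤ (8 : ℝ) ^ ((3 : ℝ) / 4) * (rmax ^ 3 / rmin ^ 4)
        * (1 - z) ^ (-(3 : ℝ) / 2) :=
  stmt_10_general rmin rmax hrmin hrmax hrmin1 f' f'' hder2 hf'0 hconc hf'1 hcurv
end

section
/- Under the hypotheses of the curvature lemma (1/r_max ≤ (1+f'(z)²)^{3/2}/|f''(z)| and |f''(z)| ≤ (1+f'(z)²)^{3/2}/r_min for 0 ≤ z < 1, with f'(z) → −∞ as z → 1⁻ and g the inverse of f with g(0)=1), if |f'(z)| ≥ 1 then |f''(z)| ≤ √8·(r_max³/r_min)·f(z)^{−3}. -/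
/-!
On `[z, 1)` the function `w ↦ f w + r_max / f' w` is nondecreasing: its derivative is
`f' - r_max f'' / f'²`, which is nonnegative because the upper curvature-radius bound gives
`|f'|³ ≤ (1 + f'²)^{3/2} ≤ r_max |f''|`. Since it tends to `0` at `1⁻` (where `f → 0` and
`f' → -∞`), it is nonpositive, i.e. `f(z) |f'(z)| ≤ r_max`. In the steep region
`1 + f'² ≤ 2 f'²`, so the lower curvature-radius bound gives
`|f''| ≤ √8 |f'|³ / r_min ≤ √8 r_max³ / (r_min f³)`.
-/

open Real Set Filter Topology

lemma sq_rpow_three_halves (a : ℝ) : (a ^ 2) ^ ((3 : ℝ) / 2) = |a| ^ 3 := by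
  rw [← sq_abs a, ← rpow_natCast |a| 2, ← rpow_mul (abs_nonneg a), ← rpow_natCast |a| 3]
  norm_num

lemma abs_pow_three_le_of_curvature_radius_le {a b r : ℝ} (hb : b ≠ 0)
    (h : (1 + a ^ 2) ^ ((3 : ℝ) / 2) / |b| ≤ r) : |a| ^ 3 ≤ r * |b| := by
  rw [div_le_iff₀ (abs_pos.mpr hb)] at h
  calc |a| ^ 3 = (a ^ 2) ^ ((3 : ℝ) / 2) := (sq_rpow_three_halves a).symm
    _ ≤ (1 + a ^ 2) ^ ((3 : ℝ) / 2) := by gcongr; linarith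
    _ ≤ r * |b| := h

lemma abs_le_of_le_curvature_radius {a b r : ℝ} (hr : 0 < r) (ha : 1 ≤ |a|)
    (h : r ≤ (1 + a ^ 2) ^ ((3 : ℝ) / 2) / |b|) : |b| ≤ √8 * |a| ^ 3 / r := by
  have hb : 0 < |b| := by
    by_contra! hb
    rw [abs_nonpos_iff.mp hb, abs_zero, div_zero] at h
    linarith
  have h8 : (2 : ℝ) ^ ((3 : ℝ) / 2) = √8 := by
    rw [show (8 : ℝ) = 2 ^ (3 : ℕ) by norm_num, sqrt_eq_rpow, ← rpow_natCast,
      ← rpow_mul zero_le_two]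
    norm_num
  rw [le_div_iff₀ hb] at h
  rw [le_div_iff₀ hr]
  calc |b| * r ≤ (1 + a ^ 2) ^ ((3 : ℝ) / 2) := by linarith
    _ ≤ (2 * a ^ 2) ^ ((3 : ℝ) / 2) := by gcongr; nlinarith [sq_abs a]
    _ = √8 * |a| ^ 3 := by rw [mul_rpow zero_le_two (sq_nonneg a), sq_rpow_three_halves, h8]

lemma strictAntiOn_Ico_of_hasDerivAt_neg {a b : ℝ} {f f' : ℝ → ℝ}
    (hf : ∀ x ∈ Ico a b, HasDerivAt f (f' x) x) (hf' : ∀ x ∈ Ioo a b, f' x < 0) :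
    StrictAntiOn f (Ico a b) :=
  strictAntiOn_of_hasDerivWithinAt_neg (convex_Ico a b)
    (fun x hx => (hf x hx).continuousAt.continuousWithinAt)
    (fun x hx => by
      rw [interior_Ico] at hx ⊢
      exact (hf x (Ioo_subset_Ico_self hx)).hasDerivWithinAt)
    (fun x hx => hf' x (by rwa [interior_Ico] at hx))

lemma MonotoneOn.le_of_tendsto_nhdsLT {β : Type*} [Preorder β] [TopologicalSpace β]
    [ClosedIciTopology β] {g : ℝ → β} {a b : ℝ} {L : β} (hg : MonotoneOn g (Ico a b))
    (hab : a < b) (hlim : Tendsto g (𝓝[<] b) (𝓝 L)) : g a ≤ L :=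
  ge_of_tendsto hlim <| mem_of_superset (Ioo_mem_nhdsLT hab) fun _ hw =>
    hg (left_mem_Ico.mpr hab) (Ioo_subset_Ico_self hw) hw.1.le

lemma monotoneOn_add_const_div_deriv {a b r : ℝ} {f f' f'' : ℝ → ℝ}
    (hf : ∀ w ∈ Ico a b, HasDerivAt f (f' w) w)
    (hf' : ∀ w ∈ Ico a b, HasDerivAt f' (f'' w) w)
    (hne : ∀ w ∈ Ico a b, f' w ≠ 0) (hf'' : ∀ w ∈ Ioo a b, f'' w < 0)
    (hcurv : ∀ w ∈ Ioo a b, |f' w| ^ 3 ≤ r * |f'' w|) :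
    MonotoneOn (fun w => f w + r / f' w) (Ico a b) := by
  have hderiv : ∀ w ∈ Ico a b,
      HasDerivAt (fun w => f w + r / f' w) (f' w + r * -f'' w / f' w ^ 2) w := fun w hw => by
    exact ((hf w hw).add ((hasDerivAt_const w r).div (hf' w hw) (hne w hw))).congr_deriv
      (by ring)
  refine monotoneOn_of_hasDerivWithinAt_nonneg (f' := fun w => f' w + r * -f'' w / f' w ^ 2)
    (convex_Ico a b)
    (fun w hw => (hderiv w hw).continuousAt.continuousWithinAt) (fun w hw => ?_) (fun w hw => ?_)
  · rw [interior_Ico] at hw ⊢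
    exact (hderiv w (Ioo_subset_Ico_self hw)).hasDerivWithinAt
  · rw [interior_Ico] at hw
    have hsq : 0 < f' w ^ 2 := pow_two_pos_of_ne_zero (hne w (Ioo_subset_Ico_self hw))
    have hcube : -f' w ^ 3 ≤ r * -f'' w := by
      rw [← abs_of_neg (hf'' w hw)]
      exact (neg_le_abs _).trans ((abs_pow _ 3).trans_le (hcurv w hw))
    rw [← neg_le_iff_add_nonneg', le_div_iff₀ hsq]
    nlinarith

lemma mul_abs_deriv_le_of_curvature_bound {a b r : ℝ} {f f' f'' : ℝ → ℝ} (hab : a < b)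
    (hf : ∀ w ∈ Ico a b, HasDerivAt f (f' w) w)
    (hf' : ∀ w ∈ Ico a b, HasDerivAt f' (f'' w) w)
    (hneg : ∀ w ∈ Ico a b, f' w < 0) (hf'' : ∀ w ∈ Ioo a b, f'' w < 0)
    (hcurv : ∀ w ∈ Ioo a b, |f' w| ^ 3 ≤ r * |f'' w|)
    (hflim : Tendsto f (𝓝[<] b) (𝓝 0)) (hf'lim : Tendsto f' (𝓝[<] b) atBot) :
    f a * |f' a| ≤ r := by
  have hlim : Tendsto (fun w => f w + r / f' w) (𝓝[<] b) (𝓝 0) := by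
    simpa using hflim.add (tendsto_const_nhds.div_atBot hf'lim)
  have hle : f a + r / f' a ≤ 0 :=
    (monotoneOn_add_const_div_deriv hf hf' (fun w hw => (hneg w hw).ne) hf'' hcurv
      ).le_of_tendsto_nhdsLT hab hlim
  have ha : 0 < -f' a := neg_pos.mpr (hneg a (left_mem_Ico.mpr hab))
  have hfa : f a ≤ r / -f' a := by rw [div_neg]; linarith
  rwa [abs_of_neg (neg_pos.mp ha), ← le_div_iff₀ ha]

theorem stmt_11_general (rmin rmax : ℝ) (hrmin : 0 < rmin)
    (f f' f'' : ℝ → ℝ)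
    (hder : ∀ z ∈ Set.Ico (0 : ℝ) 1, HasDerivAt f (f' z) z)
    (hder2 : ∀ z ∈ Set.Ico (0 : ℝ) 1, HasDerivAt f' (f'' z) z)
    (hfpos : ∀ z ∈ Set.Ico (0 : ℝ) 1, 0 < f z)
    (hf'0 : f' 0 = 0)
    (hconc : ∀ z ∈ Set.Ioo (0 : ℝ) 1, f'' z < 0)
    (hf1 : Filter.Tendsto f (nhdsWithin 1 (Set.Iio 1)) (nhds 0))
    (hf'1 : Filter.Tendsto f' (nhdsWithin 1 (Set.Iio 1)) Filter.atBot)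
    (hcurv : ∀ z ∈ Set.Ico (0 : ℝ) 1,
      rmin ≤ (1 + f' z ^ 2) ^ ((3 : ℝ) / 2) / |f'' z| ∧
      (1 + f' z ^ 2) ^ ((3 : ℝ) / 2) / |f'' z| ≤ rmax) :
    ∀ z ∈ Set.Ico (0 : ℝ) 1, 1 ≤ |f' z| →
      |f'' z| ≤ Real.sqrt 8 * (rmax ^ 3 / rmin) * (f z) ^ (-(3 : ℝ)) := by
  intro z hz hsteep
  have hz0 : 0 < z := hz.1.lt_of_ne <| by rintro rfl; norm_num [hf'0] at hsteep
  have hsub : Ico z 1 ⊆ Ico 0 1 := Ico_subset_Ico_left hz.1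
  have hsubo : Ioo z 1 ⊆ Ioo 0 1 := Ioo_subset_Ioo_left hz.1
  have hneg : ∀ w ∈ Ico z 1, f' w < 0 := fun w hw => hf'0 ▸
    strictAntiOn_Ico_of_hasDerivAt_neg hder2 hconc (left_mem_Ico.mpr zero_lt_one) (hsub hw)
      (hz0.trans_le hw.1)
  have hslope : f z * |f' z| ≤ rmax :=
    mul_abs_deriv_le_of_curvature_bound hz.2 (fun w hw => hder w (hsub hw))
      (fun w hw => hder2 w (hsub hw)) hneg (fun w hw => hconc w (hsubo hw))
      (fun w hw => abs_pow_three_le_of_curvature_radius_le (hconc w (hsubo hw)).ne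
        (hcurv w (hsub (Ioo_subset_Ico_self hw))).2) hf1 hf'1
  have hfz : 0 < f z := hfpos z hz
  calc |f'' z| ≤ √8 * |f' z| ^ 3 / rmin :=
        abs_le_of_le_curvature_radius hrmin hsteep (hcurv z hz).1
    _ ≤ √8 * (rmax / f z) ^ 3 / rmin := by
      gcongr
      rwa [le_div_iff₀ hfz, mul_comm]
    _ = √8 * (rmax ^ 3 / rmin) * f z ^ (-(3 : ℝ)) := by
      rw [rpow_neg hfz.le, show (3 : ℝ) = (3 : ℕ) by norm_num, rpow_natCast]
      field_simp

/-- in the steep region `|f'(z)| ≥ 1` one has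
`|f''(z)| ≤ √8·(r_max³/r_min)·f(z)^{−3}`. -/
theorem stmt_11 (rmin rmax : ℝ) (hrmin : 0 < rmin) (hrmax : rmin ≤ rmax)
    (f f' f'' : ℝ → ℝ)
    (hder : ∀ z ∈ Set.Ico (0 : ℝ) 1, HasDerivAt f (f' z) z)
    (hder2 : ∀ z ∈ Set.Ico (0 : ℝ) 1, HasDerivAt f' (f'' z) z)
    (hfpos : ∀ z ∈ Set.Ico (0 : ℝ) 1, 0 < f z)
    (hf0 : f 0 ≤ 1)
    (hf'0 : f' 0 = 0)
    (hconc : ∀ z ∈ Set.Ioo (0 : ℝ) 1, f'' z < 0)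
    (hf1 : Filter.Tendsto f (nhdsWithin 1 (Set.Iio 1)) (nhds 0))
    (hf'1 : Filter.Tendsto f' (nhdsWithin 1 (Set.Iio 1)) Filter.atBot)
    (hcurv : ∀ z ∈ Set.Ico (0 : ℝ) 1,
      rmin ≤ (1 + f' z ^ 2) ^ ((3 : ℝ) / 2) / |f'' z| ∧
      (1 + f' z ^ 2) ^ ((3 : ℝ) / 2) / |f'' z| ≤ rmax) :
    ∀ z ∈ Set.Ico (0 : ℝ) 1, 1 ≤ |f' z| →
      |f'' z| ≤ Real.sqrt 8 * (rmax ^ 3 / rmin) * (f z) ^ (-(3 : ℝ)) :=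
  stmt_11_general rmin rmax hrmin f f' f'' hder hder2 hfpos hf'0 hconc hf1 hf'1 hcurv
end

section
/- Let f: [−1,1] → ℝ be continuous, twice continuously differentiable on (−1,1), with f(±1) = 0, f even, f'' < 0 on (−1,1), and f(z)f'(z) → ∓r₀ as z → ±1. Set M = max_{−1≤z≤1} |f'(z)² + f(z)f''(z)| (which is finite since f'² + ff'' extends continuously). Then for every t > 0, |∫_{−t}^{t} f(u/t) f'(u/t) ψ(u) du| ≤ (r₀ + M)/4, where ψ(u) = u − ⌊u⌋ − 1/2. -/
/-!
Integrate by parts against `P u = {u}({u} - 1)/2`, a continuous primitive of the sawtooth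
`ψ u = {u} - 1/2` with `|P| ≤ 1/8`: `∫ g ψ = [g P] - ∫ g' P`. For `g u = (f f')(u/t)`, extended
to `u = ±t` by its limits `∓r₀`, the boundary term is at most `2 r₀ / 8` and the remaining
integral at most `(M/t) (2t) / 8`.
-/

open Real Set intervalIntegral MeasureTheory Filter

noncomputable def sawtoothPrimitive (x : ℝ) : ℝ := Int.fract x * (Int.fract x - 1) / 2

lemma continuous_sawtoothPrimitive : Continuous sawtoothPrimitive :=
  ContinuousOn.comp_fract'' (f := fun y : ℝ => y * (y - 1) / 2) (by fun_prop) (by norm_num)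

lemma abs_sawtoothPrimitive_le (x : ℝ) : |sawtoothPrimitive x| ≤ 1 / 8 := by
  have h0 := Int.fract_nonneg x
  have h1 := Int.fract_lt_one x
  rw [sawtoothPrimitive, abs_le]
  constructor <;> nlinarith [sq_nonneg (Int.fract x - 1 / 2)]

lemma hasDerivWithinAt_sawtoothPrimitive_Ici (x : ℝ) :
    HasDerivWithinAt sawtoothPrimitive (Int.fract x - 1 / 2) (Ici x) x := by
  set n : ℝ := Int.cast ⌊x⌋
  have hpoly : HasDerivAt (fun y => (y - n) * (y - n - 1) / 2) (Int.fract x - 1 / 2) x := by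
    refine ((((hasDerivAt_id' x).sub_const n).mul
      (((hasDerivAt_id' x).sub_const n).sub_const 1)).div_const 2).congr_deriv ?_
    rw [← Int.self_sub_floor]
    ring
  have hfract : ∀ y ∈ Ico x (n + 1), Int.fract y = y - n := fun y hy =>
    Int.fract_eq_iff.2 ⟨by simp only [n]; linarith [Int.floor_le x, hy.1], by linarith [hy.2],
      ⌊x⌋, by ring⟩
  refine hpoly.hasDerivWithinAt.congr_of_eventuallyEq ?_ ?_
  · filter_upwards [inter_mem_nhdsWithin (Ici x) (Iio_mem_nhds (Int.lt_floor_add_one x))]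
      with y hy
    simp only [sawtoothPrimitive, hfract y hy]
  · simp only [sawtoothPrimitive, ← Int.self_sub_floor, n]

lemma IntervalIntegrable.of_norm_le_on_Ioo {E : Type*} [NormedAddCommGroup E] {g : ℝ → E}
    {a b C : ℝ} (hab : a ≤ b) (hm : AEStronglyMeasurable g (volume.restrict (Ioo a b)))
    (hC : ∀ x ∈ Ioo a b, ‖g x‖ ≤ C) : IntervalIntegrable g volume a b := by
  rw [intervalIntegrable_iff_integrableOn_Ioo_of_le hab]
  exact ⟨hm, .of_bounded (ae_restrict_of_forall_mem measurableSet_Ioo hC)⟩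

lemma norm_integral_le_of_norm_le_on_Ioo {E : Type*} [NormedAddCommGroup E] [NormedSpace ℝ E]
    {g : ℝ → E} {a b C : ℝ} (hab : a ≤ b) (hC : ∀ x ∈ Ioo a b, ‖g x‖ ≤ C) :
    ‖∫ x in a..b, g x‖ ≤ C * (b - a) := by
  rw [← abs_of_nonneg (sub_nonneg.2 hab)]
  refine norm_integral_le_of_norm_le_const_ae ?_
  filter_upwards [(Ioo_ae_eq_Ioc (μ := volume) (a := a) (b := b)).mem_iff] with x hx hxab
  rw [uIoc_of_le hab, ← hx] at hxab
  exact hC x hxab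

theorem abs_integral_mul_sawtooth_le {g g' : ℝ → ℝ} {a b C : ℝ} (hab : a ≤ b)
    (hg : ContinuousOn g (Icc a b)) (hg' : ∀ x ∈ Ioo a b, HasDerivAt g (g' x) x)
    (hC : ∀ x ∈ Ioo a b, |g' x| ≤ C) :
    |∫ x in a..b, g x * (Int.fract x - 1 / 2)| ≤ (|g a| + |g b|) / 8 + C * (b - a) / 8 := by
  have hP := abs_sawtoothPrimitive_le
  have hderiv : ∀ x ∈ Ioo a b, HasDerivWithinAt (fun x => g x * sawtoothPrimitive x)
      (g' x * sawtoothPrimitive x + g x * (Int.fract x - 1 / 2)) (Ioi x) x := fun x hx =>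
    (hg' x hx).hasDerivWithinAt.mul
      ((hasDerivWithinAt_sawtoothPrimitive_Ici x).mono Ioi_subset_Ici_self)
  have hg'P_le : ∀ x ∈ Ioo a b, ‖g' x * sawtoothPrimitive x‖ ≤ C * (1 / 8) := fun x hx => by
    rw [norm_mul]
    exact mul_le_mul (hC x hx) (hP x) (norm_nonneg _) ((abs_nonneg _).trans (hC x hx))
  have hg'P_int : IntervalIntegrable (fun x => g' x * sawtoothPrimitive x) volume a b := by
    refine .of_norm_le_on_Ioo hab (AEStronglyMeasurable.mul ?_
      continuous_sawtoothPrimitive.aestronglyMeasurable) hg'P_le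
    -- `g'` agrees with `deriv g` on `(a, b)`, and derivatives are always measurable.
    exact (aestronglyMeasurable_deriv g _).congr
      (ae_restrict_of_forall_mem measurableSet_Ioo fun x hx => (hg' x hx).deriv)
  have hgψ_int : IntervalIntegrable (fun x => g x * (Int.fract x - 1 / 2)) volume a b := by
    obtain ⟨B, hB⟩ := isCompact_Icc.exists_bound_of_continuousOn hg
    refine .of_norm_le_on_Ioo (C := B * (1 / 2)) hab
      (((hg.mono Ioo_subset_Icc_self).aestronglyMeasurable measurableSet_Ioo).mul
        (measurable_fract.sub_const _).aestronglyMeasurable) fun x hx => ?_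
    have hψ : ‖Int.fract x - 1 / 2‖ ≤ 1 / 2 := by
      rw [norm_eq_abs, abs_le]
      constructor <;> linarith [Int.fract_nonneg x, Int.fract_lt_one x]
    rw [norm_mul]
    exact mul_le_mul (hB x (Ioo_subset_Icc_self hx)) hψ (norm_nonneg _)
      ((norm_nonneg _).trans (hB x (Ioo_subset_Icc_self hx)))
  have hparts := integral_eq_sub_of_hasDeriv_right_of_le hab
    (hg.mul continuous_sawtoothPrimitive.continuousOn) hderiv (hg'P_int.add hgψ_int)
  rw [integral_add hg'P_int hgψ_int, Pi.mul_apply, Pi.mul_apply] at hparts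
  have hrest := norm_integral_le_of_norm_le_on_Ioo hab hg'P_le
  rw [norm_eq_abs] at hrest
  calc |∫ x in a..b, g x * (Int.fract x - 1 / 2)|
      = |g b * sawtoothPrimitive b - g a * sawtoothPrimitive a
          - ∫ x in a..b, g' x * sawtoothPrimitive x| := by rw [← hparts]; ring_nf
    _ ≤ |g b| * |sawtoothPrimitive b| + |g a| * |sawtoothPrimitive a|
          + |∫ x in a..b, g' x * sawtoothPrimitive x| := by
        rw [← abs_mul, ← abs_mul]
        exact (abs_sub _ _).trans (add_le_add_left (abs_sub _ _) _)
    _ ≤ |g b| * (1 / 8) + |g a| * (1 / 8) + C * (1 / 8) * (b - a) := by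
        gcongr <;> apply hP
    _ = (|g a| + |g b|) / 8 + C * (b - a) / 8 := by ring

theorem abs_integral_comp_div_mul_sawtooth_le {g g' : ℝ → ℝ} {C t : ℝ} (ht : 0 < t)
    (hg : ContinuousOn g (Icc (-1) 1)) (hg' : ∀ z ∈ Ioo (-1 : ℝ) 1, HasDerivAt g (g' z) z)
    (hC : ∀ z ∈ Ioo (-1 : ℝ) 1, |g' z| ≤ C) :
    |∫ u in (-t)..t, g (u / t) * (Int.fract u - 1 / 2)| ≤ (|g (-1)| + |g 1|) / 8 + C / 4 := by
  have hscale : ∀ u ∈ Ioo (-t) t, u / t ∈ Ioo (-1 : ℝ) 1 := fun u hu =>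
    ⟨by rw [lt_div_iff₀ ht]; linarith [hu.1], by rw [div_lt_one ht]; exact hu.2⟩
  have hscale_Icc : MapsTo (· / t) (Icc (-t) t) (Icc (-1 : ℝ) 1) := fun u hu =>
    ⟨by rw [le_div_iff₀ ht]; linarith [hu.1], by rw [div_le_one ht]; exact hu.2⟩
  have hbound := abs_integral_mul_sawtooth_le (g := fun u => g (u / t))
    (g' := fun u => g' (u / t) / t) (C := C / t) (by linarith)
    (hg.comp (continuous_id.div_const t).continuousOn hscale_Icc)
    (fun u hu => by
      have h := (hg' _ (hscale u hu)).comp u ((hasDerivAt_id' u).div_const t)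
      exact h.congr_deriv (by ring))
    (fun u hu => by
      rw [abs_div, abs_of_pos ht]
      exact div_le_div_of_nonneg_right (hC _ (hscale u hu)) ht.le)
  refine hbound.trans_eq ?_
  rw [div_self ht.ne', neg_div, div_self ht.ne']
  field_simp
  ring

theorem stmt_15_general (r₀ M : ℝ) (hr₀ : 0 < r₀)
    (f f' f'' : ℝ → ℝ) (ψ : ℝ → ℝ)
    (hψ : ∀ w, ψ w = w - ⌊w⌋ - 1 / 2)
    (hder : ∀ z ∈ Set.Ioo (-1 : ℝ) 1, HasDerivAt f (f' z) z)
    (hder2 : ∀ z ∈ Set.Ioo (-1 : ℝ) 1, HasDerivAt f' (f'' z) z)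
    (hlim1 : Filter.Tendsto (fun z => f z * f' z)
      (nhdsWithin 1 (Set.Iio 1)) (nhds (-r₀)))
    (hlimm1 : Filter.Tendsto (fun z => f z * f' z)
      (nhdsWithin (-1) (Set.Ioi (-1))) (nhds r₀))
    (hM : ∀ z ∈ Set.Ioo (-1 : ℝ) 1, |f' z ^ 2 + f z * f'' z| ≤ M) :
    ∀ t : ℝ, 0 < t →
      |∫ u in (-t)..t, f (u / t) * f' (u / t) * ψ u| ≤ (r₀ + M) / 4 := by
  obtain rfl : ψ = fun w => Int.fract w - 1 / 2 := funext fun w => by rw [hψ, Int.self_sub_floor]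
  have hderiv : ∀ z ∈ Ioo (-1 : ℝ) 1,
      HasDerivAt (fun z => f z * f' z) (f' z ^ 2 + f z * f'' z) z := fun z hz =>
    ((hder z hz).mul (hder2 z hz)).congr_deriv (by ring)
  have hcont : ContinuousOn (fun z => f z * f' z) (Ioo (-1) 1) := fun z hz =>
    (hderiv z hz).continuousAt.continuousWithinAt
  set g := extendFrom (Ioo (-1 : ℝ) 1) fun z => f z * f' z
  have hg : ContinuousOn g (Icc (-1) 1) := continuousOn_Icc_extendFrom_Ioo hcont hlimm1 hlim1
  have hg_eq : ∀ z ∈ Ioo (-1 : ℝ) 1, g z = f z * f' z := extendFrom_extends hcont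
  have hg_deriv : ∀ z ∈ Ioo (-1 : ℝ) 1, HasDerivAt g (f' z ^ 2 + f z * f'' z) z := fun z hz =>
    (hderiv z hz).congr_of_eventuallyEq (eventuallyEq_of_mem (isOpen_Ioo.mem_nhds hz) hg_eq)
  have hg_neg_one : g (-1) = r₀ := eq_lim_at_left_extendFrom_Ioo (by norm_num) hlimm1
  have hg_one : g 1 = -r₀ := eq_lim_at_right_extendFrom_Ioo (by norm_num) hlim1
  intro t ht
  have hintegrand : ∫ u in (-t)..t, f (u / t) * f' (u / t) * (Int.fract u - 1 / 2)
      = ∫ u in (-t)..t, g (u / t) * (Int.fract u - 1 / 2) := by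
    refine integral_congr_ae ?_
    filter_upwards [(Ioo_ae_eq_Ioc (μ := volume) (a := -t) (b := t)).mem_iff] with u hu hmem
    rw [uIoc_of_le (by linarith), ← hu] at hmem
    rw [hg_eq _ ⟨by rw [lt_div_iff₀ ht]; linarith [hmem.1], by rw [div_lt_one ht]; exact hmem.2⟩]
  rw [hintegrand]
  refine (abs_integral_comp_div_mul_sawtooth_le ht hg hg_deriv hM).trans_eq ?_
  rw [hg_neg_one, hg_one, abs_neg, abs_of_pos hr₀]
  ring

/-- `|∫_{−t}^{t} f(u/t) f'(u/t) ψ(u) du| ≤ (r₀ + M)/4`. -/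
theorem stmt_15 (r₀ M : ℝ) (hr₀ : 0 < r₀)
    (f f' f'' : ℝ → ℝ) (ψ : ℝ → ℝ)
    (hψ : ∀ w, ψ w = w - ⌊w⌋ - 1 / 2)
    (hf : ContinuousOn f (Set.Icc (-1 : ℝ) 1))
    (hder : ∀ z ∈ Set.Ioo (-1 : ℝ) 1, HasDerivAt f (f' z) z)
    (hder2 : ∀ z ∈ Set.Ioo (-1 : ℝ) 1, HasDerivAt f' (f'' z) z)
    (hf''cont : ContinuousOn f'' (Set.Ioo (-1 : ℝ) 1))
    (hf1 : f 1 = 0) (hfm1 : f (-1) = 0)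
    (heven : ∀ z, f (-z) = f z)
    (hconc : ∀ z ∈ Set.Ioo (-1 : ℝ) 1, f'' z < 0)
    (hlim1 : Filter.Tendsto (fun z => f z * f' z)
      (nhdsWithin 1 (Set.Iio 1)) (nhds (-r₀)))
    (hlimm1 : Filter.Tendsto (fun z => f z * f' z)
      (nhdsWithin (-1) (Set.Ioi (-1))) (nhds r₀))
    (hM : ∀ z ∈ Set.Ioo (-1 : ℝ) 1, |f' z ^ 2 + f z * f'' z| ≤ M) :
    ∀ t : ℝ, 0 < t →
      |∫ u in (-t)..t, f (u / t) * f' (u / t) * ψ u| ≤ (r₀ + M) / 4 :=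
  stmt_15_general r₀ M hr₀ f f' f'' ψ hψ hder hder2 hlim1 hlimm1 hM
end
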